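/- Let A be the (ℓ+1)×(ℓ+1) real symmetric tridiagonal matrix with diagonal entries p_0,...,p_ℓ and off-diagonal entries -λ (λ > 0). Suppose for some i ∈ {1,...,ℓ}: |p_i − p_{i−1}| ≤ ε, and p_j ≥ max{p_{i−1}, p_i} + C for all j ∉ {i−1, i}, where C ≥ 4λ + ε. Then the spectral gap of A is at least 3λ/4. -/

import Mathlib

/-- The `(ℓ+1) × (ℓ+1)` real symmetric tridiagonal matrix with diagonal entries `p 0, ..., p ℓ`
and all off-diagonal entries equal to `-lam`. -/
def tridiag (ℓ : ℕ) (p : Fin (ℓ + 1) → ℝ) (lam : ℝ) :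
    Matrix (Fin (ℓ + 1)) (Fin (ℓ + 1)) ℝ :=
  Matrix.of fun i j =>
    if i = j then p i
    else if (i : ℕ) + 1 = (j : ℕ) ∨ (j : ℕ) + 1 = (i : ℕ) then -lam
    else 0

/-- The eigenvalues of a Hermitian matrix, sorted in increasing order. -/
noncomputable def sortedEigenvalues {N : ℕ} {𝕜 : Type} [RCLike 𝕜]
    {A : Matrix (Fin N) (Fin N) 𝕜} (hA : A.IsHermitian) : Fin N → ℝ :=
  hA.eigenvalues ∘ Tuple.sort hA.eigenvalues

/-! Let `a, b` be the diagonal entries at the edge `(e, e + 1)` and `μ` the lower eigenvalue of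
the block `[[a, -λ], [-λ, b]]`, so `(a - μ)(b - μ) = λ²`. Its ground state, extended by zero, has
Rayleigh quotient `μ`, so the smallest eigenvalue is at most `μ`. For `x` orthogonal to it, bound
`2 x_d x_{d+1} ≤ x_d² + x_{d+1}²` on every other edge: this costs at most `2λ` on the far diagonal
entries, which exceed `μ + 3λ`, and on the pair `(x_e, x_{e+1})`, an eigenvector of the block for
`μ + (a - μ) + (b - μ) ≥ μ + 2λ`, it costs `λ`. So the quadratic form is at least `(μ + λ) ‖x‖²`
on a hyperplane, and by min–max the second eigenvalue is at least `μ + λ`: the gap is at least `λ`.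
-/

open Matrix Finset

lemma sum_mul_sq_ge_of_le_off_pair {ι : Type*} [Fintype ι] [DecidableEq ι] {p x : ι → ℝ}
    {j₀ j₁ : ι} (h : j₀ ≠ j₁) {m : ℝ} (hm : ∀ j, j ≠ j₀ → j ≠ j₁ → m ≤ p j) :
    p j₀ * x j₀ ^ 2 + p j₁ * x j₁ ^ 2 + m * (∑ j, x j ^ 2 - x j₀ ^ 2 - x j₁ ^ 2)
      ≤ ∑ j, p j * x j ^ 2 := by
  have hsplit (f : ι → ℝ) : ∑ j, f j = f j₀ + f j₁ + ∑ j ∈ {j₀, j₁}ᶜ, f j := by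
    rw [← Finset.sum_add_sum_compl {j₀, j₁}, Finset.sum_pair h]
  rw [hsplit (fun j => p j * x j ^ 2), hsplit (fun j => x j ^ 2)]
  have hrest : m * ∑ j ∈ {j₀, j₁}ᶜ, x j ^ 2 ≤ ∑ j ∈ {j₀, j₁}ᶜ, p j * x j ^ 2 := by
    rw [Finset.mul_sum]
    refine Finset.sum_le_sum fun j hj => ?_
    simp only [Finset.mem_compl, Finset.mem_insert, Finset.mem_singleton, not_or] at hj
    exact mul_le_mul_of_nonneg_right (hm j hj.1 hj.2) (sq_nonneg _)
  linarith

lemma two_mul_sum_castSucc_mul_succ_le {ℓ : ℕ} (x : Fin (ℓ + 1) → ℝ) (e : Fin ℓ) :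
    2 * ∑ d : Fin ℓ, x d.castSucc * x d.succ
      ≤ 2 * x e.castSucc * x e.succ + 2 * ∑ j, x j ^ 2 - x e.castSucc ^ 2 - x e.succ ^ 2 := by
  have hedges : ∑ d : Fin ℓ, (x d.castSucc ^ 2 + x d.succ ^ 2) ≤ 2 * ∑ j, x j ^ 2 := by
    rw [Finset.sum_add_distrib, two_mul]
    gcongr
    · rw [Fin.sum_univ_castSucc (f := fun j => x j ^ 2)]
      linarith [sq_nonneg (x (Fin.last ℓ))]
    · rw [Fin.sum_univ_succ (f := fun j => x j ^ 2)]
      linarith [sq_nonneg (x 0)]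
  have hrest : ∑ d ∈ univ.erase e, 2 * (x d.castSucc * x d.succ)
      ≤ ∑ d ∈ univ.erase e, (x d.castSucc ^ 2 + x d.succ ^ 2) :=
    Finset.sum_le_sum fun d _ => by nlinarith [sq_nonneg (x d.castSucc - x d.succ)]
  rw [← Finset.add_sum_erase _ _ (Finset.mem_univ e)] at hedges
  rw [Finset.mul_sum, ← Finset.add_sum_erase _ _ (Finset.mem_univ e)]
  linarith

lemma sum_sum_ite_val_add_one_eq {ℓ : ℕ} (f : Fin (ℓ + 1) → Fin (ℓ + 1) → ℝ) :
    ∑ j : Fin (ℓ + 1), ∑ k : Fin (ℓ + 1), (if (j : ℕ) + 1 = k then f j k else 0)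
      = ∑ e : Fin ℓ, f e.castSucc e.succ := by
  rw [Finset.sum_comm, Fin.sum_univ_succ]
  have hcond (j : Fin (ℓ + 1)) (e : Fin ℓ) : (j : ℕ) + 1 = e.succ ↔ j = e.castSucc := by
    simp [Fin.ext_iff]
  simp only [Fin.val_zero, Nat.add_one_ne_zero, if_false, Finset.sum_const_zero, zero_add, hcond,
    Finset.sum_ite_eq', Finset.mem_univ, if_true]

namespace Matrix.IsHermitian

variable {n : Type*} [Fintype n] [DecidableEq n] {A : Matrix n n ℝ} (hA : A.IsHermitian)
include hA

lemma dotProduct_eigenvectorBasis (j k : n) :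
    ⇑(hA.eigenvectorBasis j) ⬝ᵥ ⇑(hA.eigenvectorBasis k) = if j = k then 1 else 0 := by
  have := orthonormal_iff_ite.mp hA.eigenvectorBasis.orthonormal k j
  simpa [EuclideanSpace.inner_eq_star_dotProduct, eq_comm] using this

lemma dotProduct_eq_sum_eigenvectorBasis (v w : n → ℝ) :
    v ⬝ᵥ w = ∑ k, (v ⬝ᵥ hA.eigenvectorBasis k) * (hA.eigenvectorBasis k ⬝ᵥ w) := by
  have := hA.eigenvectorBasis.sum_inner_mul_inner (WithLp.toLp 2 w) (WithLp.toLp 2 v)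
  simp only [EuclideanSpace.inner_eq_star_dotProduct, star_trivial] at this
  rw [← this]
  exact Finset.sum_congr rfl fun k _ => by rw [dotProduct_comm v, mul_comm]

lemma eigenvectorBasis_dotProduct_mulVec (k : n) (v : n → ℝ) :
    ⇑(hA.eigenvectorBasis k) ⬝ᵥ (A *ᵥ v) = hA.eigenvalues k * (hA.eigenvectorBasis k ⬝ᵥ v) := by
  have hAT : Aᵀ = A := by
    simpa [Matrix.conjTranspose_eq_transpose_of_trivial] using hA.eq
  rw [dotProduct_mulVec, ← mulVec_transpose, hAT, hA.mulVec_eigenvectorBasis, smul_dotProduct]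
  rfl

lemma dotProduct_mulVec_eq_sum_eigenvalues (v : n → ℝ) :
    v ⬝ᵥ (A *ᵥ v) = ∑ k, hA.eigenvalues k * (hA.eigenvectorBasis k ⬝ᵥ v) ^ 2 := by
  rw [hA.dotProduct_eq_sum_eigenvectorBasis]
  refine Finset.sum_congr rfl fun k _ => ?_
  rw [hA.eigenvectorBasis_dotProduct_mulVec, dotProduct_comm v]
  ring

lemma dotProduct_self_eq_sum_sq (v : n → ℝ) :
    v ⬝ᵥ v = ∑ k, (hA.eigenvectorBasis k ⬝ᵥ v) ^ 2 := by
  rw [hA.dotProduct_eq_sum_eigenvectorBasis]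
  exact Finset.sum_congr rfl fun k _ => by rw [dotProduct_comm v, sq]

lemma mul_dotProduct_self_le_of_le_eigenvalues {c : ℝ} (hc : ∀ k, c ≤ hA.eigenvalues k)
    (v : n → ℝ) : c * (v ⬝ᵥ v) ≤ v ⬝ᵥ (A *ᵥ v) := by
  rw [hA.dotProduct_mulVec_eq_sum_eigenvalues, hA.dotProduct_self_eq_sum_sq, Finset.mul_sum]
  exact Finset.sum_le_sum fun k _ => mul_le_mul_of_nonneg_right (hc k) (sq_nonneg _)

end Matrix.IsHermitian

section SortedEigenvalues

variable {n : ℕ} {A : Matrix (Fin (n + 1)) (Fin (n + 1)) ℝ} (hA : A.IsHermitian)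

lemma sortedEigenvalues_zero_le (k : Fin (n + 1)) :
    sortedEigenvalues hA 0 ≤ hA.eigenvalues k := by
  simpa [sortedEigenvalues] using
    Tuple.monotone_sort hA.eigenvalues (Fin.zero_le ((Tuple.sort hA.eigenvalues).symm k))

lemma sortedEigenvalues_zero_mul_dotProduct_self_le (v : Fin (n + 1) → ℝ) :
    sortedEigenvalues hA 0 * (v ⬝ᵥ v) ≤ v ⬝ᵥ (A *ᵥ v) :=
  hA.mul_dotProduct_self_le_of_le_eigenvalues (sortedEigenvalues_zero_le hA) v

lemma le_sortedEigenvalues_one [NeZero n] {u : Fin (n + 1) → ℝ} {t : ℝ}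
    (h : ∀ x, x ⬝ᵥ u = 0 → t * (x ⬝ᵥ x) ≤ x ⬝ᵥ (A *ᵥ x)) : t ≤ sortedEigenvalues hA 1 := by
  set σ := Tuple.sort hA.eigenvalues
  set b₀ := ⇑(hA.eigenvectorBasis (σ 0))
  set b₁ := ⇑(hA.eigenvectorBasis (σ 1))
  have hσ : σ 0 ≠ σ 1 := σ.injective.ne Fin.zero_ne_one'
  obtain ⟨α, β, hαβ, hxu⟩ : ∃ α β : ℝ, (α ≠ 0 ∨ β ≠ 0) ∧ (α • b₀ + β • b₁) ⬝ᵥ u = 0 := by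
    by_cases h₀ : b₀ ⬝ᵥ u = 0
    · exact ⟨1, 0, by simp, by simp [h₀]⟩
    · refine ⟨b₁ ⬝ᵥ u, -(b₀ ⬝ᵥ u), Or.inr (neg_ne_zero.mpr h₀), ?_⟩
      simp only [add_dotProduct, smul_dotProduct, smul_eq_mul]
      ring
  have hxx : (α • b₀ + β • b₁) ⬝ᵥ (α • b₀ + β • b₁) = α ^ 2 + β ^ 2 := by
    simp only [b₀, b₁, dotProduct_add, dotProduct_smul, add_dotProduct, smul_dotProduct,
      hA.dotProduct_eigenvectorBasis, hσ, hσ.symm, ↓reduceIte, smul_eq_mul, mul_one, mul_zero,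
      add_zero, zero_add]
    ring
  have hxAx : (α • b₀ + β • b₁) ⬝ᵥ (A *ᵥ (α • b₀ + β • b₁))
      = α ^ 2 * hA.eigenvalues (σ 0) + β ^ 2 * hA.eigenvalues (σ 1) := by
    simp only [b₀, b₁, mulVec_add, mulVec_smul, hA.mulVec_eigenvectorBasis, dotProduct_add,
      dotProduct_smul, add_dotProduct, smul_dotProduct, hA.dotProduct_eigenvectorBasis, hσ, hσ.symm,
      ↓reduceIte, smul_eq_mul, mul_one, mul_zero, add_zero, zero_add]
    ring
  have hmono : hA.eigenvalues (σ 0) ≤ hA.eigenvalues (σ 1) :=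
    Tuple.monotone_sort hA.eigenvalues (Fin.zero_le 1)
  have hpos : 0 < α ^ 2 + β ^ 2 := by
    rcases hαβ with hα | hβ <;> positivity
  have ht := h _ hxu
  rw [hxx, hxAx] at ht
  show t ≤ hA.eigenvalues (σ 1)
  nlinarith

end SortedEigenvalues

lemma exists_lower_eigenvalue_two_by_two (a b : ℝ) {lam : ℝ} (hlam : lam ≠ 0) :
    ∃ μ, (a - μ) * (b - μ) = lam ^ 2 ∧ μ < a ∧ μ < b := by
  set r := √(lam ^ 2 + ((b - a) / 2) ^ 2)
  have hr : r ^ 2 = lam ^ 2 + ((b - a) / 2) ^ 2 := Real.sq_sqrt (by positivity)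
  have hlt : |(b - a) / 2| < r := by
    rw [← Real.sqrt_sq_eq_abs]
    exact Real.sqrt_lt_sqrt (sq_nonneg _) (by linarith [pow_pos (abs_pos.mpr hlam) 2, sq_abs lam])
  refine ⟨(a + b) / 2 - r, by linear_combination hr, ?_, ?_⟩ <;>
    linarith [le_abs_self ((b - a) / 2), neg_abs_le ((b - a) / 2)]

section Tridiag

variable {ℓ : ℕ} (p : Fin (ℓ + 1) → ℝ) (lam : ℝ)

lemma tridiag_apply_self (j : Fin (ℓ + 1)) : tridiag ℓ p lam j j = p j := by
  simp [tridiag]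

lemma tridiag_apply_castSucc_succ (e : Fin ℓ) : tridiag ℓ p lam e.castSucc e.succ = -lam := by
  simp [tridiag, Fin.ext_iff]

lemma tridiag_apply_succ_castSucc (e : Fin ℓ) : tridiag ℓ p lam e.succ e.castSucc = -lam := by
  simp [tridiag, Fin.ext_iff]

lemma tridiag_apply_eq (j k : Fin (ℓ + 1)) :
    tridiag ℓ p lam j k = (if j = k then p j else 0) + (if (j : ℕ) + 1 = k then -lam else 0)
      + (if (k : ℕ) + 1 = j then -lam else 0) := by
  rcases j with ⟨j, hj⟩; rcases k with ⟨k, hk⟩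
  simp only [tridiag, Matrix.of_apply, Fin.mk.injEq]
  split_ifs <;> first | ring1 | (exfalso; omega)

lemma tridiag_quadForm (x : Fin (ℓ + 1) → ℝ) :
    x ⬝ᵥ (tridiag ℓ p lam *ᵥ x)
      = ∑ j, p j * x j ^ 2 - 2 * lam * ∑ e : Fin ℓ, x e.castSucc * x e.succ := by
  have hexpand : x ⬝ᵥ (tridiag ℓ p lam *ᵥ x) = ∑ j, ∑ k, x j * tridiag ℓ p lam j k * x k := by
    simp only [dotProduct, mulVec, Finset.mul_sum, mul_assoc]
  rw [hexpand]
  simp only [tridiag_apply_eq, add_mul, mul_add, Finset.sum_add_distrib, ite_mul, mul_ite,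
    zero_mul, mul_zero, Finset.sum_ite_eq, Finset.mem_univ, if_true]
  rw [Finset.sum_comm (γ := Fin (ℓ + 1)) (s := univ) (t := univ)
      (f := fun j k : Fin (ℓ + 1) => if (k : ℕ) + 1 = j then x j * -lam * x k else 0),
    sum_sum_ite_val_add_one_eq, sum_sum_ite_val_add_one_eq, Finset.mul_sum]
  rw [add_assoc, ← Finset.sum_add_distrib, sub_eq_add_neg, ← Finset.sum_neg_distrib]
  congr 1
  · exact Finset.sum_congr rfl fun j _ => by ring
  · exact Finset.sum_congr rfl fun e _ => by ring

end Tridiag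

section EdgeVec

variable {ℓ : ℕ} (e : Fin ℓ) (α β : ℝ)

def edgeVec : Fin (ℓ + 1) → ℝ := Pi.single e.castSucc α + Pi.single e.succ β

lemma dotProduct_edgeVec (x : Fin (ℓ + 1) → ℝ) :
    x ⬝ᵥ edgeVec e α β = x e.castSucc * α + x e.succ * β := by
  simp [edgeVec, dotProduct_add]

lemma edgeVec_dotProduct_self : edgeVec e α β ⬝ᵥ edgeVec e α β = α ^ 2 + β ^ 2 := by
  have hne : e.castSucc ≠ e.succ := Fin.castSucc_lt_succ.ne
  simp [edgeVec, dotProduct_add, hne, hne.symm, sq]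

lemma edgeVec_dotProduct_tridiag_mulVec (p : Fin (ℓ + 1) → ℝ) (lam : ℝ) :
    edgeVec e α β ⬝ᵥ (tridiag ℓ p lam *ᵥ edgeVec e α β)
      = p e.castSucc * α ^ 2 - 2 * lam * α * β + p e.succ * β ^ 2 := by
  rw [dotProduct_comm, dotProduct_edgeVec]
  simp only [edgeVec, mulVec_add, mulVec_single, op_smul_eq_smul, Pi.add_apply, Pi.smul_apply,
    col_apply, smul_eq_mul, tridiag_apply_self, tridiag_apply_castSucc_succ,
    tridiag_apply_succ_castSucc]
  ring

end EdgeVec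

lemma add_mul_dotProduct_self_le_tridiag_quadForm {ℓ : ℕ} {p : Fin (ℓ + 1) → ℝ} {lam μ : ℝ}
    {e : Fin ℓ} (hlam : 0 < lam) (hμ : (p e.castSucc - μ) * (p e.succ - μ) = lam ^ 2)
    (hμa : μ < p e.castSucc) (hfar : ∀ j, j ≠ e.castSucc → j ≠ e.succ → μ + 3 * lam ≤ p j)
    {x : Fin (ℓ + 1) → ℝ} (hx : x ⬝ᵥ edgeVec e lam (p e.castSucc - μ) = 0) :
    (μ + lam) * (x ⬝ᵥ x) ≤ x ⬝ᵥ (tridiag ℓ p lam *ᵥ x) := by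
  set q := p e.castSucc - μ
  set s := p e.succ - μ
  set y := x e.castSucc
  set z := x e.succ
  have hq : 0 < q := sub_pos.mpr hμa
  have hs : 0 < s := pos_of_mul_pos_right (hμ ▸ pow_pos hlam 2) hq.le
  have hqs : 2 * lam ≤ q + s := by nlinarith [sq_nonneg (q - s)]
  have hyz : lam * y + q * z = 0 := by
    rw [dotProduct_edgeVec] at hx
    linarith
  -- `(y, z)` is orthogonal to the ground state of the block, hence an eigenvector for `μ + q + s`
  have hblock : s * y ^ 2 + q * z ^ 2 + 2 * lam * y * z = 0 := by
    have : q * (s * y ^ 2 + q * z ^ 2 + 2 * lam * y * z) = (lam * y + q * z) ^ 2 := by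
      linear_combination y ^ 2 * hμ
    rw [hyz] at this
    simpa [hq.ne'] using this
  have hdiag := sum_mul_sq_ge_of_le_off_pair (x := x) Fin.castSucc_lt_succ.ne hfar
  have hedge := mul_le_mul_of_nonneg_left (two_mul_sum_castSucc_mul_succ_le x e) hlam.le
  have hself : x ⬝ᵥ x = ∑ j, x j ^ 2 := by
    simp only [dotProduct, sq]
  rw [tridiag_quadForm, hself]
  linarith [mul_nonneg (sub_nonneg.mpr hqs) (add_nonneg (sq_nonneg y) (sq_nonneg z))]

theorem le_sortedEigenvalues_one_sub_zero_tridiag {ℓ : ℕ} {p : Fin (ℓ + 1) → ℝ} {lam : ℝ}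
    (e : Fin ℓ) (hlam : 0 < lam)
    (hfar : ∀ j, j ≠ e.castSucc → j ≠ e.succ → min (p e.castSucc) (p e.succ) + 3 * lam ≤ p j)
    (hA : (tridiag ℓ p lam).IsHermitian) :
    lam ≤ sortedEigenvalues hA 1 - sortedEigenvalues hA 0 := by
  obtain ⟨μ, hμ, hμa, hμb⟩ := exists_lower_eigenvalue_two_by_two (p e.castSucc) (p e.succ) hlam.ne'
  have hfar' : ∀ j, j ≠ e.castSucc → j ≠ e.succ → μ + 3 * lam ≤ p j := fun j h₀ h₁ =>
    le_trans (by linarith [lt_min hμa hμb]) (hfar j h₀ h₁)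
  set u := edgeVec e lam (p e.castSucc - μ)
  have hu : 0 < u ⬝ᵥ u := by
    rw [edgeVec_dotProduct_self]
    positivity
  have hlow : sortedEigenvalues hA 0 ≤ μ := by
    have hRayleigh := sortedEigenvalues_zero_mul_dotProduct_self_le hA u
    have hground : u ⬝ᵥ (tridiag ℓ p lam *ᵥ u) = μ * (u ⬝ᵥ u) := by
      rw [edgeVec_dotProduct_tridiag_mulVec, edgeVec_dotProduct_self]
      linear_combination (p e.castSucc - μ) * hμ
    rw [hground] at hRayleigh
    exact le_of_mul_le_mul_right hRayleigh hu
  have : NeZero ℓ := ⟨e.pos.ne'⟩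
  have hhigh : μ + lam ≤ sortedEigenvalues hA 1 :=
    le_sortedEigenvalues_one hA fun x hx =>
      add_mul_dotProduct_self_le_tridiag_quadForm hlam hμ hμa hfar' hx
  linarith

/-- if `|p i − p (i−1)| ≤ ε` and `p j ≥ max (p (i−1)) (p i) + C` for all
`j ∉ {i−1, i}`, where `C ≥ 4λ + ε`, then the spectral gap of the tridiagonal matrix is at
least `3λ/4`. -/
theorem tridiag_gap_double (ℓ : ℕ) (p : Fin (ℓ + 1) → ℝ) (lam ε C : ℝ)
    (hlam : 0 < lam) (hε : 0 ≤ ε) (hC : C ≥ 4 * lam + ε)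
    (i : ℕ) (hi1 : 1 ≤ i) (hi2 : i ≤ ℓ)
    (hfar : ∀ j : Fin (ℓ + 1), (j : ℕ) ≠ i → (j : ℕ) ≠ i - 1 →
      p j ≥ max (p ⟨i - 1, by omega⟩) (p ⟨i, by omega⟩) + C)
    (hA : (tridiag ℓ p lam).IsHermitian) :
    sortedEigenvalues hA 1 - sortedEigenvalues hA 0 ≥ 3 * lam / 4 := by
  set e : Fin ℓ := ⟨i - 1, by omega⟩
  have hcs : e.castSucc = ⟨i - 1, by omega⟩ := rfl
  have hs : e.succ = ⟨i, by omega⟩ := Fin.ext (Nat.sub_add_cancel hi1)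
  have hgap := le_sortedEigenvalues_one_sub_zero_tridiag e hlam (fun j h₀ h₁ => by
    have := hfar j (fun h => h₁ (hs ▸ Fin.ext h)) (fun h => h₀ (hcs ▸ Fin.ext h))
    rw [hcs, hs]
    linarith [min_le_max (a := p ⟨i - 1, by omega⟩) (b := p ⟨i, by omega⟩)]) hA
  linarith
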